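/- arXiv:2006.09968 — 3 statements merged into one kernel-verified Lean document; each statement's English description precedes it below -/
import Mathlib

section
/- Let p be a prime, r ≥ 1 an integer, and a₁, a₂, a₃ integers with gcd(p, a₁, a₂, a₃) = 1. Then the number of pairs (h, k) ∈ (ℤ/p^rℤ)² satisfying the simultaneous congruences a₁h + a₂k ≡ 0 (mod p^r) and a₂h + a₃k ≡ 0 (mod p^r) is at most gcd(p^r, a₁a₃ − a₂²). -/
/-!
Eliminating one unknown shows that `D = a₁a₃ - a₂²` annihilates both `h` and `k`. As `p` does
not divide all of `a₁, a₂, a₃`, one of them is a unit modulo `p ^ r`, so a solution is determined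
by one of its coordinates, which lies in the annihilator of `D` in `ℤ/p^rℤ`. By Bézout that
annihilator is killed by `gcd(p ^ r, D)`, and in a cyclic group at most `n` elements are killed
by `n`.
-/

section SymmetricSystem

variable {R : Type*} [CommRing R] {a₁ a₂ a₃ h k : R}

theorem det_mul_fst_eq_zero (e₁ : a₁ * h + a₂ * k = 0) (e₂ : a₂ * h + a₃ * k = 0) :
    (a₁ * a₃ - a₂ ^ 2) * h = 0 := by
  linear_combination a₃ * e₁ - a₂ * e₂

theorem det_mul_snd_eq_zero (e₁ : a₁ * h + a₂ * k = 0) (e₂ : a₂ * h + a₃ * k = 0) :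
    (a₁ * a₃ - a₂ ^ 2) * k = 0 := by
  linear_combination a₁ * e₂ - a₂ * e₁

theorem card_symmetric_system_le_card_annihilator [Finite R]
    (hu : IsUnit a₁ ∨ IsUnit a₂ ∨ IsUnit a₃) :
    Nat.card {hk : R × R // a₁ * hk.1 + a₂ * hk.2 = 0 ∧ a₂ * hk.1 + a₃ * hk.2 = 0} ≤
      Nat.card {x : R // (a₁ * a₃ - a₂ ^ 2) * x = 0} := by
  rcases hu with hu | hu | hu
  · refine Nat.card_le_card_of_injective
      (fun s => ⟨s.1.2, det_mul_snd_eq_zero s.2.1 s.2.2⟩) fun s t hst => ?_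
    have hk : s.1.2 = t.1.2 := congrArg Subtype.val hst
    have hh : a₁ * s.1.1 = a₁ * t.1.1 := by linear_combination s.2.1 - t.2.1 - a₂ * hk
    exact Subtype.ext (Prod.ext (hu.mul_left_cancel hh) hk)
  · refine Nat.card_le_card_of_injective
      (fun s => ⟨s.1.1, det_mul_fst_eq_zero s.2.1 s.2.2⟩) fun s t hst => ?_
    have hh : s.1.1 = t.1.1 := congrArg Subtype.val hst
    have hk : a₂ * s.1.2 = a₂ * t.1.2 := by linear_combination s.2.1 - t.2.1 - a₁ * hh
    exact Subtype.ext (Prod.ext hh (hu.mul_left_cancel hk))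
  · refine Nat.card_le_card_of_injective
      (fun s => ⟨s.1.1, det_mul_fst_eq_zero s.2.1 s.2.2⟩) fun s t hst => ?_
    have hh : s.1.1 = t.1.1 := congrArg Subtype.val hst
    have hk : a₃ * s.1.2 = a₃ * t.1.2 := by linear_combination s.2.2 - t.2.2 - a₂ * hh
    exact Subtype.ext (Prod.ext hh (hu.mul_left_cancel hk))

end SymmetricSystem

namespace ZMod

theorem card_annihilator_le_gcd (N : ℕ) [NeZero N] (D : ℤ) :
    Nat.card {x : ZMod N // (D : ZMod N) * x = 0} ≤ Int.gcd N D := by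
  set g := Int.gcd N D
  have hg : 0 < g := Int.gcd_pos_of_ne_zero_left _ (by exact_mod_cast NeZero.ne N)
  have hsub : ∀ x : ZMod N, (D : ZMod N) * x = 0 → g • x = 0 := by
    intro x hx
    have hbez : ((g : ℤ) : ZMod N) = (N : ℤ) * Int.gcdA N D + D * Int.gcdB N D := by
      rw [Int.gcd_eq_gcd_ab]; push_cast; ring
    rw [nsmul_eq_mul, ← Int.cast_natCast, hbez]
    push_cast
    rw [ZMod.natCast_self]
    linear_combination (Int.gcdB N D : ZMod N) * hx
  calc Nat.card {x : ZMod N // (D : ZMod N) * x = 0}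
      ≤ Nat.card {x : ZMod N // g • x = 0} := Nat.card_mono (Set.toFinite _) hsub
    _ = (Finset.univ.filter fun x : ZMod N => g • x = 0).card := by
        rw [Nat.card_eq_fintype_card, Fintype.card_subtype]
    _ ≤ g := IsAddCyclic.card_nsmul_eq_zero_le hg

theorem isUnit_intCast_of_not_dvd {p : ℕ} (hp : p.Prime) (r : ℕ) {a : ℤ} (ha : ¬ (p : ℤ) ∣ a) :
    IsUnit (a : ZMod (p ^ r)) := by
  rw [coe_int_isUnit_iff_isCoprime, Nat.cast_pow]
  exact (((Nat.prime_iff_prime_int.mp hp).coprime_iff_not_dvd).mpr ha).pow_left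

end ZMod

theorem not_dvd_or_not_dvd_or_not_dvd_of_gcd_eq_one {p : ℕ} (hp : p ≠ 1) {a₁ a₂ a₃ : ℤ}
    (hgcd : Int.gcd (Int.gcd (Int.gcd (p : ℤ) a₁) a₂) a₃ = 1) :
    ¬ (p : ℤ) ∣ a₁ ∨ ¬ (p : ℤ) ∣ a₂ ∨ ¬ (p : ℤ) ∣ a₃ := by
  by_contra! h
  obtain ⟨h₁, h₂, h₃⟩ := h
  have : (p : ℤ) ∣ (1 : ℕ) :=
    hgcd ▸ Int.dvd_coe_gcd (Int.dvd_coe_gcd (Int.dvd_coe_gcd dvd_rfl h₁) h₂) h₃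
  exact hp (Nat.dvd_one.mp (Int.natCast_dvd_natCast.mp this))

theorem statement10_general (p : ℕ) (hp : p.Prime) (r : ℕ) (a₁ a₂ a₃ : ℤ)
    (hgcd : Int.gcd (Int.gcd (Int.gcd (p : ℤ) a₁) a₂) a₃ = 1) :
    Nat.card {hk : ZMod (p ^ r) × ZMod (p ^ r) //
        (a₁ : ZMod (p ^ r)) * hk.1 + (a₂ : ZMod (p ^ r)) * hk.2 = 0 ∧
        (a₂ : ZMod (p ^ r)) * hk.1 + (a₃ : ZMod (p ^ r)) * hk.2 = 0} ≤
      Int.gcd ((p : ℤ) ^ r) (a₁ * a₃ - a₂ ^ 2) := by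
  have : NeZero (p ^ r) := ⟨pow_ne_zero r hp.ne_zero⟩
  have hunit := fun a : ℤ => ZMod.isUnit_intCast_of_not_dvd hp r (a := a)
  have hu := (not_dvd_or_not_dvd_or_not_dvd_of_gcd_eq_one hp.ne_one hgcd).imp (hunit _)
    (Or.imp (hunit _) (hunit _))
  calc _ ≤ _ := card_symmetric_system_le_card_annihilator hu
    _ = Nat.card {x : ZMod (p ^ r) // ((a₁ * a₃ - a₂ ^ 2 : ℤ) : ZMod (p ^ r)) * x = 0} := by
        push_cast; rfl
    _ ≤ _ := by
        simpa only [Nat.cast_pow] using ZMod.card_annihilator_le_gcd (p ^ r) (a₁ * a₃ - a₂ ^ 2)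

/-- Let `p` be a prime, `r ≥ 1`, and `a₁, a₂, a₃ ∈ ℤ` with
`gcd(p, a₁, a₂, a₃) = 1`. Then the number of pairs `(h, k) ∈ (ℤ/p^rℤ)²` with
`a₁h + a₂k ≡ a₂h + a₃k ≡ 0 (mod p^r)` is at most `gcd(p^r, a₁a₃ − a₂²)`. -/
theorem statement10 (p : ℕ) (hp : p.Prime) (r : ℕ) (hr : 1 ≤ r) (a₁ a₂ a₃ : ℤ)
    (hgcd : Int.gcd (Int.gcd (Int.gcd (p : ℤ) a₁) a₂) a₃ = 1) :
    Nat.card {hk : ZMod (p ^ r) × ZMod (p ^ r) //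
        (a₁ : ZMod (p ^ r)) * hk.1 + (a₂ : ZMod (p ^ r)) * hk.2 = 0 ∧
        (a₂ : ZMod (p ^ r)) * hk.1 + (a₃ : ZMod (p ^ r)) * hk.2 = 0} ≤
      Int.gcd ((p : ℤ) ^ r) (a₁ * a₃ - a₂ ^ 2) :=
  statement10_general p hp r a₁ a₂ a₃ hgcd
end

section
/- Let q ∈ ℕ and let s ≥ 2 be a real number. Then Σ_{1 ≤ a₁,a₂,a₃ ≤ q, gcd(q,a₁,a₂,a₃)=1} gcd(q, a₁a₃ − a₂²)^{s/2} ≤ τ(q)² q^{s/2 + 2}, where τ(q) is the number of positive divisors of q. -/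
/-!
Bound `gcd(q, n)^(s/2)` by the sum of `d^(s/2)` over the divisors `d ∣ q` that divide `n`
(forgetting the coprimality condition) and exchange the order of summation. For fixed `d ∣ q`
and `a₁, a₂`, the solutions of `a₁ a₃ ≡ a₂² (mod d)` lie in one class modulo
`d / gcd(d, a₁)`, so at most `q gcd(d, a₁) / d` of them lie in `[1, q]`; and
`Σ_{a ≤ q} gcd(d, a) ≤ τ(d) q` since `gcd(d, a)` is at most the sum of the divisors of `d`
that divide `a`. So `d` contributes at most `d^(s/2 - 1) τ(d) q³ ≤ τ(q) q^(s/2 + 2)`,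
where `s ≥ 2` is used.
-/

open Finset

theorem Nat.card_le_div_of_modEq {q m : ℕ} {S : Finset ℕ} (hS : S ⊆ Icc 1 q) (hm : m ∣ q)
    (hmod : ∀ a ∈ S, ∀ b ∈ S, a ≡ b [MOD m]) : #S ≤ q / m := by
  have hS' : ∀ a ∈ S, 1 ≤ a ∧ a ≤ q := fun a ha => mem_Icc.mp (hS ha)
  refine (card_le_card_of_injOn (fun a => (a - 1) / m) (t := range (q / m)) ?_ ?_).trans
    (card_range _).le
  · intro a ha
    exact mem_range.mpr (Nat.div_lt_div_of_lt_of_dvd hm (by have := hS' a ha; omega))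
  · intro a ha b hb hab
    have hmod' : a - 1 ≡ b - 1 [MOD m] := Nat.ModEq.add_right_cancel' 1 <| by
      rw [Nat.sub_add_cancel (hS' a ha).1, Nat.sub_add_cancel (hS' b hb).1]
      exact hmod a ha b hb
    have := Nat.ext_div_modEq hab hmod'
    have := hS' a ha; have := hS' b hb
    omega

theorem card_filter_dvd_mul_sub_mul_le {q d : ℕ} (hdq : d ∣ q) (hd : 0 < d) (b : ℕ)
    (c : ℤ) :
    #{x ∈ Icc 1 q | (d : ℤ) ∣ b * ((x : ℕ) : ℤ) - c} * d ≤ q * Nat.gcd d b := by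
  have hgd : Nat.gcd d b ∣ d := Nat.gcd_dvd_left d b
  have hmq : d / Nat.gcd d b ∣ q := (Nat.div_dvd_of_dvd hgd).trans hdq
  have hcard :
      #{x ∈ Icc 1 q | (d : ℤ) ∣ b * ((x : ℕ) : ℤ) - c} ≤ q / (d / Nat.gcd d b) := by
    refine Nat.card_le_div_of_modEq (filter_subset _ _) hmq fun x hx y hy => ?_
    have hxy : b * x ≡ b * y [MOD d] := by
      rw [← Int.natCast_modEq_iff]
      push_cast
      exact (Int.modEq_iff_dvd.mpr (mem_filter.mp hx).2).symm.trans
        (Int.modEq_iff_dvd.mpr (mem_filter.mp hy).2)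
    exact hxy.cancel_left_div_gcd hd
  calc #{x ∈ Icc 1 q | (d : ℤ) ∣ b * ((x : ℕ) : ℤ) - c} * d
      ≤ q / (d / Nat.gcd d b) * (d / Nat.gcd d b * Nat.gcd d b) := by
        rw [Nat.div_mul_cancel hgd]
        exact Nat.mul_le_mul_right d hcard
    _ = q * Nat.gcd d b := by rw [← mul_assoc, Nat.div_mul_cancel hmq]

theorem sum_gcd_Icc_le {d : ℕ} (hd : d ≠ 0) (q : ℕ) :
    ∑ a ∈ Icc 1 q, Nat.gcd d a ≤ #d.divisors * q := by
  calc ∑ a ∈ Icc 1 q, Nat.gcd d a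
      ≤ ∑ a ∈ Icc 1 q, ∑ e ∈ d.divisors with e ∣ a, e := by
        refine sum_le_sum fun a _ => single_le_sum (f := id)
          (fun _ _ => Nat.zero_le _) ?_
        simpa [hd] using ⟨Nat.gcd_dvd_left d a, Nat.gcd_dvd_right d a⟩
    _ = ∑ e ∈ d.divisors, #{a ∈ Icc 1 q | e ∣ a} * e := by
        simp_rw [sum_filter]
        rw [sum_comm]
        refine sum_congr rfl fun e _ => ?_
        rw [← sum_filter, sum_const, smul_eq_mul]
    _ ≤ ∑ _e ∈ d.divisors, q := by
        refine sum_le_sum fun e _ => ?_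
        rw [show Icc 1 q = Ioc 0 q from Icc_succ_left_eq_Ioc 0 q,
          Nat.Ioc_filter_dvd_card_eq_div]
        exact Nat.div_mul_le_self q e
    _ = #d.divisors * q := by rw [sum_const, smul_eq_mul]

def numDvdMulSubSq (q d : ℕ) : ℕ :=
  ∑ a₁ ∈ Icc 1 q, ∑ a₂ ∈ Icc 1 q,
    #{a₃ ∈ Icc 1 q | (d : ℤ) ∣ a₁ * ((a₃ : ℕ) : ℤ) - (a₂ : ℤ) ^ 2}

theorem numDvdMulSubSq_mul_le {q d : ℕ} (hdq : d ∣ q) (hd : 0 < d) :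
    numDvdMulSubSq q d * d ≤ #d.divisors * q ^ 3 := by
  calc numDvdMulSubSq q d * d
      ≤ ∑ a₁ ∈ Icc 1 q, ∑ _a₂ ∈ Icc 1 q, q * Nat.gcd d a₁ := by
        simp_rw [numDvdMulSubSq, sum_mul]
        exact sum_le_sum fun a₁ _ => sum_le_sum fun a₂ _ =>
          card_filter_dvd_mul_sub_mul_le hdq hd a₁ _
    _ = q ^ 2 * ∑ a₁ ∈ Icc 1 q, Nat.gcd d a₁ := by
        simp [mul_sum, sq, mul_assoc]
    _ ≤ q ^ 2 * (#d.divisors * q) := Nat.mul_le_mul_left _ (sum_gcd_Icc_le hd.ne' q)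
    _ = #d.divisors * q ^ 3 := by ring

theorem Int.apply_gcd_le_sum_divisors_dvd {q : ℕ} (hq : q ≠ 0) (n : ℤ) {f : ℕ → ℝ}
    (hf : ∀ d ∈ q.divisors, 0 ≤ f d) :
    f (Int.gcd q n) ≤ ∑ d ∈ q.divisors with ((d : ℕ) : ℤ) ∣ n, f d :=
  single_le_sum (fun d hd => hf d (mem_filter.mp hd).1) <| by
    simpa [hq] using
      ⟨Int.natCast_dvd_natCast.mp (Int.gcd_dvd_left (q : ℤ) n), Int.gcd_dvd_right (q : ℤ) n⟩

theorem rpow_mul_numDvdMulSubSq_le {q d : ℕ} (hq : q ≠ 0) (hdq : d ∣ q) {s : ℝ}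
    (hs : 2 ≤ s) :
    (d : ℝ) ^ (s / 2) * numDvdMulSubSq q d ≤ #q.divisors * (q : ℝ) ^ (s / 2 + 2) := by
  have hd : 0 < d := Nat.pos_of_dvd_of_pos hdq (Nat.pos_of_ne_zero hq)
  have hτ : #d.divisors ≤ #q.divisors := card_le_card (Nat.divisors_subset_of_dvd hq hdq)
  have hdq' : (d : ℝ) ≤ q := by exact_mod_cast Nat.le_of_dvd (Nat.pos_of_ne_zero hq) hdq
  calc (d : ℝ) ^ (s / 2) * numDvdMulSubSq q d
      = (d : ℝ) ^ (s / 2 - 1) * (numDvdMulSubSq q d * d : ℕ) := by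
        rw [Real.rpow_sub_one (by positivity)]
        push_cast
        field_simp
    _ ≤ (q : ℝ) ^ (s / 2 - 1) * (#q.divisors * q ^ 3 : ℕ) := by
        gcongr ?_ * ?_
        · exact Real.rpow_le_rpow (by positivity) hdq' (by linarith)
        · exact_mod_cast (numDvdMulSubSq_mul_le hdq hd).trans (Nat.mul_le_mul_right _ hτ)
    _ = #q.divisors * (q : ℝ) ^ (s / 2 + 2) := by
        rw [show s / 2 + 2 = s / 2 - 1 + 3 by ring, Real.rpow_add (by positivity)]
        norm_cast
        push_cast
        ring

theorem statement11_general (q : ℕ) (s : ℝ) (hs : 2 ≤ s) :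
    (∑ a₁ ∈ Finset.Icc 1 q, ∑ a₂ ∈ Finset.Icc 1 q, ∑ a₃ ∈ Finset.Icc 1 q,
        if Nat.gcd (Nat.gcd (Nat.gcd q a₁) a₂) a₃ = 1 then
          ((Int.gcd (q : ℤ) ((a₁ : ℤ) * (a₃ : ℤ) - (a₂ : ℤ) ^ 2) : ℝ)) ^ (s / 2)
        else 0) ≤
      (q.divisors.card : ℝ) ^ 2 * (q : ℝ) ^ (s / 2 + 2) := by
  rcases eq_or_ne q 0 with rfl | hq
  · simp
  calc _ ≤ ∑ a₁ ∈ Icc 1 q, ∑ a₂ ∈ Icc 1 q, ∑ a₃ ∈ Icc 1 q,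
          ∑ d ∈ q.divisors with ((d : ℕ) : ℤ) ∣ (a₁ : ℤ) * a₃ - (a₂ : ℤ) ^ 2,
            (d : ℝ) ^ (s / 2) := by
        gcongr with a₁ _ a₂ _ a₃ _
        split_ifs
        · exact Int.apply_gcd_le_sum_divisors_dvd hq _ (f := fun d : ℕ => (d : ℝ) ^ (s / 2))
            fun _ _ => by positivity
        · positivity
    _ = ∑ d ∈ q.divisors, (d : ℝ) ^ (s / 2) * numDvdMulSubSq q d := by
        simp only [numDvdMulSubSq, sum_filter, Nat.cast_sum, natCast_card_filter, mul_sum,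
          mul_ite, mul_one, mul_zero]
        simp_rw [sum_comm (s := Icc 1 q) (t := q.divisors)]
    _ ≤ ∑ _d ∈ q.divisors, #q.divisors * (q : ℝ) ^ (s / 2 + 2) :=
        sum_le_sum fun d hd =>
          rpow_mul_numDvdMulSubSq_le hq (Nat.dvd_of_mem_divisors hd) hs
    _ = (q.divisors.card : ℝ) ^ 2 * (q : ℝ) ^ (s / 2 + 2) := by
        rw [sum_const, nsmul_eq_mul]; ring

/-- For `q ≥ 1` and real `s ≥ 2`,
`Σ_{1 ≤ a₁,a₂,a₃ ≤ q, gcd(q,a₁,a₂,a₃)=1} gcd(q, a₁a₃ − a₂²)^{s/2} ≤ τ(q)² q^{s/2+2}`,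
where `τ(q)` is the number of positive divisors of `q`. -/
theorem statement11 (q : ℕ) (hq : 0 < q) (s : ℝ) (hs : 2 ≤ s) :
    (∑ a₁ ∈ Finset.Icc 1 q, ∑ a₂ ∈ Finset.Icc 1 q, ∑ a₃ ∈ Finset.Icc 1 q,
        if Nat.gcd (Nat.gcd (Nat.gcd q a₁) a₂) a₃ = 1 then
          ((Int.gcd (q : ℤ) ((a₁ : ℤ) * (a₃ : ℤ) - (a₂ : ℤ) ^ 2) : ℝ)) ^ (s / 2)
        else 0) ≤
      (q.divisors.card : ℝ) ^ 2 * (q : ℝ) ^ (s / 2 + 2) :=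
  statement11_general q s hs
end

section
/- For every s ∈ ℕ there is a constant C_s such that for all N ≥ 1 and every measurable set 𝔅 ⊆ 𝕋³, one has ∫_𝔅 sup_{ξ,η ∈ 𝕋} |S_N(α; ξ, η)|^{2s} dα ≤ C_s N² ∫_𝔅 ∫_{𝕋²} |S_N(α; ξ, η)|^{2s} dξ dη dα. -/
open scoped BigOperators ENNReal NNReal
open MeasureTheory

/-- `e(t) = e^{2πit}`. -/
noncomputable def e (t : ℝ) : ℂ := Complex.exp (2 * Real.pi * Complex.I * t)

-- Exponential sum `S_N(α; ξ, η) = Σ_{|x| ≤ N, |y| ≤ N} e(α·φ(x,y) + ξx + ηy)`.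
open Classical in
noncomputable def SN (N : ℝ) (α : Fin 3 → ℝ) (ξ η : ℝ) : ℂ :=
  ∑' x : ℤ, ∑' y : ℤ,
    if |(x : ℝ)| ≤ N ∧ |(y : ℝ)| ≤ N then
      e (α 0 * (x : ℝ) ^ 2 + α 1 * (2 * (x : ℝ) * (y : ℝ)) + α 2 * (y : ℝ) ^ 2 +
        ξ * x + η * y)
    else 0

open Finset Pointwise

/-!
For fixed `α`, `S_N(α; ·)^s` is a trigonometric polynomial `P(ξ, η) = Σ_{q ∈ S} a_q e(q·(ξ, η))`
whose frequencies lie in the box `[-s⌊N⌋, s⌊N⌋]²`, so `#S ≤ ((2s+1)N)²`. For any such `P`, the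
triangle inequality, Cauchy–Schwarz and Parseval give
`|P(ξ₀, η₀)|² ≤ (Σ |a_q|)² ≤ #S · Σ |a_q|² = #S · ∫_{𝕋²} |P|²`.
This bounds `sup_{ξ,η} |S_N|^{2s}` pointwise in `α` with `C_s = (2s+1)²`; integrate over `𝔅`.
-/

lemma e_add (a b : ℝ) : e (a + b) = e a * e b := by
  simp only [e, Complex.ofReal_add, mul_add, Complex.exp_add]

@[simp] lemma e_zero : e 0 = 1 := by simp [e]

@[fun_prop] lemma continuous_e : Continuous e := by
  unfold e; fun_prop

@[simp] lemma norm_e (t : ℝ) : ‖e t‖ = 1 := by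
  rw [e, mul_right_comm]
  exact_mod_cast Complex.norm_exp_ofReal_mul_I (2 * Real.pi * t)

lemma conj_e (t : ℝ) : starRingEnd ℂ (e t) = e (-t) := by
  simp only [e, ← Complex.exp_conj, map_mul, Complex.conj_I, Complex.conj_ofReal, map_ofNat]
  push_cast
  ring_nf

lemma integral_e_mul_intCast (k : ℤ) :
    ∫ t in Set.Icc (0 : ℝ) 1, e (t * k) = if k = 0 then 1 else 0 := by
  rw [integral_Icc_eq_integral_Ioc, ← intervalIntegral.integral_of_le zero_le_one]
  split_ifs with hk
  · simp [hk]
  · have hc : 2 * Real.pi * Complex.I * k ≠ 0 := by simp [Real.pi_ne_zero, hk]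
    have he : ∀ t : ℝ, e (t * k) = Complex.exp (2 * Real.pi * Complex.I * k * t) := fun t => by
      simp only [e]; push_cast; ring_nf
    simp only [he, integral_exp_mul_complex hc, Complex.ofReal_one, Complex.ofReal_zero, mul_zero,
      Complex.exp_zero, mul_one]
    rw [← Complex.exp_int_mul_two_pi_mul_I k]
    ring_nf

noncomputable def torusChar (q : ℤ × ℤ) (p : ℝ × ℝ) : ℂ := e (p.1 * q.1 + p.2 * q.2)

lemma torusChar_add (q q' : ℤ × ℤ) (p : ℝ × ℝ) :
    torusChar (q + q') p = torusChar q p * torusChar q' p := by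
  rw [torusChar, torusChar, torusChar, ← e_add]
  congr 1
  simp only [Prod.fst_add, Prod.snd_add]
  push_cast
  ring

lemma conj_torusChar (q : ℤ × ℤ) (p : ℝ × ℝ) :
    starRingEnd ℂ (torusChar q p) = torusChar (-q) p := by
  rw [torusChar, torusChar, conj_e]
  congr 1
  simp only [Prod.fst_neg, Prod.snd_neg]
  push_cast
  ring

@[fun_prop] lemma continuous_torusChar (q : ℤ × ℤ) : Continuous (torusChar q) := by
  unfold torusChar; fun_prop

/-- Lebesgue measure on `[0,1]² ≅ 𝕋²`, written as a product so that integrals against it split into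
the iterated integrals `∫ ξ in [0,1], ∫ η in [0,1]` of the statement. -/
noncomputable abbrev unitSquare : Measure (ℝ × ℝ) :=
  (volume.restrict (Set.Icc 0 1)).prod (volume.restrict (Set.Icc 0 1))

lemma integrable_torusChar (q : ℤ × ℤ) : Integrable (torusChar q) unitSquare :=
  .of_bound (continuous_torusChar q).aestronglyMeasurable 1
    (.of_forall fun p => by simp [torusChar])

lemma integral_torusChar (q : ℤ × ℤ) :
    ∫ p, torusChar q p ∂unitSquare = if q = 0 then 1 else 0 := by
  have hsplit : ∀ p : ℝ × ℝ, torusChar q p = e (p.1 * q.1) * e (p.2 * q.2) := fun p =>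
    e_add _ _
  simp_rw [hsplit]
  rw [integral_prod_mul (fun ξ : ℝ => e (ξ * q.1)) (fun η : ℝ => e (η * q.2)),
    integral_e_mul_intCast, integral_e_mul_intCast]
  simp only [Prod.ext_iff, Prod.fst_zero, Prod.snd_zero, ite_zero_mul_ite_zero, mul_one]

noncomputable def trigPoly (S : Finset (ℤ × ℤ)) (a : ℤ × ℤ → ℂ) (p : ℝ × ℝ) : ℂ :=
  ∑ q ∈ S, a q * torusChar q p

@[fun_prop] lemma continuous_trigPoly (S : Finset (ℤ × ℤ)) (a : ℤ × ℤ → ℂ) :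
    Continuous (trigPoly S a) := by
  unfold trigPoly; fun_prop

lemma integral_norm_sq_trigPoly (S : Finset (ℤ × ℤ)) (a : ℤ × ℤ → ℂ) :
    ∫ p, ‖trigPoly S a p‖ ^ 2 ∂unitSquare = ∑ q ∈ S, ‖a q‖ ^ 2 := by
  have hexpand : ∀ p, (‖trigPoly S a p‖ ^ 2 : ℂ) =
      ∑ q ∈ S, ∑ q' ∈ S, a q * starRingEnd ℂ (a q') * torusChar (q - q') p := fun p => by
    rw [← Complex.mul_conj', trigPoly, map_sum, sum_mul_sum]
    refine sum_congr rfl fun q _ => sum_congr rfl fun q' _ => ?_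
    rw [map_mul, conj_torusChar, sub_eq_add_neg, torusChar_add]
    ring
  have hint : ∀ q q', Integrable (fun p => a q * starRingEnd ℂ (a q') * torusChar (q - q') p)
      unitSquare := fun q q' => (integrable_torusChar _).const_mul _
  apply Complex.ofReal_injective
  rw [← integral_complex_ofReal]
  push_cast
  simp_rw [hexpand]
  rw [integral_finsetSum _ fun q _ => integrable_finsetSum _ fun q' _ => hint q q']
  refine sum_congr rfl fun q hq => ?_
  rw [integral_finsetSum _ fun q' _ => hint q q']
  simp only [integral_const_mul, integral_torusChar, sub_eq_zero, mul_ite, mul_one, mul_zero,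
    sum_ite_eq, if_pos hq, Complex.mul_conj']

lemma norm_sq_trigPoly_le (S : Finset (ℤ × ℤ)) (a : ℤ × ℤ → ℂ) (p₀ : ℝ × ℝ) :
    ‖trigPoly S a p₀‖ ^ 2 ≤ #S * ∫ p, ‖trigPoly S a p‖ ^ 2 ∂unitSquare := by
  have htriangle : ‖trigPoly S a p₀‖ ≤ ∑ q ∈ S, ‖a q‖ :=
    (norm_sum_le _ _).trans_eq (by simp [torusChar])
  rw [integral_norm_sq_trigPoly]
  exact (pow_le_pow_left₀ (norm_nonneg _) htriangle 2).trans sq_sum_le_card_mul_sum_sq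

lemma exists_trigPoly_mul_eq (S T : Finset (ℤ × ℤ)) (a b : ℤ × ℤ → ℂ) :
    ∃ c, trigPoly S a * trigPoly T b = trigPoly (S + T) c := by
  classical
  refine ⟨fun k => ∑ x ∈ S ×ˢ T with x.1 + x.2 = k, a x.1 * b x.2, funext fun p => ?_⟩
  rw [Pi.mul_apply, trigPoly, trigPoly, trigPoly, sum_mul_sum, ← sum_product',
    ← sum_fiberwise_of_maps_to fun x hx => add_mem_add (mem_product.1 hx).1 (mem_product.1 hx).2]
  refine sum_congr rfl fun k _ => ?_
  rw [sum_mul]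
  refine sum_congr rfl fun x hx => ?_
  rw [← (mem_filter.1 hx).2, torusChar_add]
  ring

lemma exists_trigPoly_pow_eq (S : Finset (ℤ × ℤ)) (a : ℤ × ℤ → ℂ) (n : ℕ) :
    ∃ c, trigPoly S a ^ n = trigPoly (n • S) c := by
  induction n with
  | zero => exact ⟨1, funext fun p => by simp [trigPoly, ← singleton_zero, torusChar]⟩
  | succ n ih =>
    obtain ⟨c, hc⟩ := ih
    rw [pow_succ, hc, succ_nsmul]
    exact exists_trigPoly_mul_eq _ _ _ _

lemma nsmul_Icc_subset {α : Type*} [AddCommMonoid α] [PartialOrder α] [IsOrderedAddMonoid α]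
    [LocallyFiniteOrder α] [DecidableEq α] (a b : α) (n : ℕ) :
    n • Icc a b ⊆ Icc (n • a) (n • b) := by
  induction n with
  | zero => simp [← singleton_zero]
  | succ n ih =>
    rw [succ_nsmul, succ_nsmul, succ_nsmul]
    exact (add_subset_add_right ih).trans (Icc_add_Icc_subset _ _ _ _)

noncomputable def quadPhase (α : Fin 3 → ℝ) (p : ℤ × ℤ) : ℂ :=
  e (α 0 * (p.1 : ℝ) ^ 2 + α 1 * (2 * (p.1 : ℝ) * (p.2 : ℝ)) + α 2 * (p.2 : ℝ) ^ 2)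

lemma abs_intCast_le_iff_mem_Icc (x : ℤ) (N : ℝ) : |(x : ℝ)| ≤ N ↔ x ∈ Icc (-⌊N⌋) ⌊N⌋ := by
  rw [mem_Icc, ← abs_le, ← Int.cast_abs, Int.le_floor]

lemma SN_eq_trigPoly (N : ℝ) (α : Fin 3 → ℝ) (ξ η : ℝ) :
    SN N α ξ η = trigPoly (Icc (-⌊N⌋, -⌊N⌋) (⌊N⌋, ⌊N⌋)) (quadPhase α) (ξ, η) := by
  simp only [SN, trigPoly, Icc_prod_def, sum_product, abs_intCast_le_iff_mem_Icc]
  rw [tsum_eq_sum (s := Icc (-⌊N⌋) ⌊N⌋) fun x hx => by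
    simp only [hx, false_and, if_false, tsum_zero]]
  refine sum_congr rfl fun x hx => ?_
  rw [tsum_eq_sum (s := Icc (-⌊N⌋) ⌊N⌋) fun y hy => by simp only [hy, and_false, if_false]]
  refine sum_congr rfl fun y hy => ?_
  rw [if_pos ⟨hx, hy⟩, quadPhase, torusChar, ← e_add]
  ring_nf

lemma card_nsmul_Icc_le (s : ℕ) {n : ℤ} (hn : 0 ≤ n) :
    (#(s • Icc (-n, -n) (n, n)) : ℝ) ≤ (2 * s * n + 1) ^ 2 := by
  have hcard : #(Icc (s • (-n, -n)) (s • (n, n))) = (2 * s * n + 1).toNat ^ 2 := by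
    simp only [card_Icc_prod, Prod.smul_mk, Int.card_Icc, nsmul_eq_mul]
    ring_nf
  have hle := card_le_card (nsmul_Icc_subset (-n, -n) (n, n) s)
  rw [hcard] at hle
  have htoNat : ((2 * s * n + 1).toNat : ℤ) = 2 * s * n + 1 := Int.toNat_of_nonneg (by positivity)
  have : (#(s • Icc (-n, -n) (n, n)) : ℤ) ≤ (2 * s * n + 1) ^ 2 := by
    rw [← htoNat]; exact_mod_cast hle
  exact_mod_cast this

lemma norm_SN_pow_le (s : ℕ) {N : ℝ} (hN : 1 ≤ N) (α : Fin 3 → ℝ) (ξ η : ℝ) :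
    ‖SN N α ξ η‖ ^ (2 * s) ≤
      ((2 * s + 1) * N) ^ 2 * ∫ p, ‖SN N α p.1 p.2‖ ^ (2 * s) ∂unitSquare := by
  set A := Icc (-⌊N⌋, -⌊N⌋) (⌊N⌋, ⌊N⌋)
  obtain ⟨c, hc⟩ := exists_trigPoly_pow_eq A (quadPhase α) s
  have hSN : ∀ p : ℝ × ℝ, ‖SN N α p.1 p.2‖ ^ (2 * s) = ‖trigPoly (s • A) c p‖ ^ 2 := fun p => by
    rw [SN_eq_trigPoly, ← hc, Pi.pow_apply, norm_pow, ← pow_mul, mul_comm]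
  have hfloor : 0 ≤ ⌊N⌋ := Int.floor_nonneg.2 (by linarith)
  have hcard : (#(s • A) : ℝ) ≤ ((2 * s + 1) * N) ^ 2 := by
    refine (card_nsmul_Icc_le s hfloor).trans (pow_le_pow_left₀ (by positivity) ?_ 2)
    have := Int.floor_le N
    nlinarith
  calc ‖SN N α ξ η‖ ^ (2 * s) = ‖trigPoly (s • A) c (ξ, η)‖ ^ 2 := hSN (ξ, η)
    _ ≤ #(s • A) * ∫ p, ‖trigPoly (s • A) c p‖ ^ 2 ∂unitSquare := norm_sq_trigPoly_le _ _ _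
    _ ≤ ((2 * s + 1) * N) ^ 2 * ∫ p, ‖SN N α p.1 p.2‖ ^ (2 * s) ∂unitSquare := by
        simp_rw [hSN]
        gcongr

lemma enorm_SN_pow_le (s : ℕ) {N : ℝ} (hN : 1 ≤ N) (α : Fin 3 → ℝ) (ξ η : ℝ) :
    (‖SN N α ξ η‖₊ : ℝ≥0∞) ^ (2 * s) ≤
      ((2 * s + 1) ^ 2 : ℝ≥0) * ENNReal.ofReal (N ^ 2) *
        ∫⁻ ξ in Set.Icc (0 : ℝ) 1, ∫⁻ η in Set.Icc (0 : ℝ) 1, (‖SN N α ξ η‖₊ : ℝ≥0∞) ^ (2 * s) := by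
  set f : ℝ × ℝ → ℝ := fun p => ‖SN N α p.1 p.2‖ ^ (2 * s)
  have hf : Continuous f := by
    simp only [f, SN_eq_trigPoly]
    fun_prop
  have hlintegral : ∫⁻ ξ in Set.Icc (0 : ℝ) 1, ∫⁻ η in Set.Icc (0 : ℝ) 1,
      (‖SN N α ξ η‖₊ : ℝ≥0∞) ^ (2 * s) = ∫⁻ p, ‖f p‖ₑ ∂unitSquare := by
    rw [lintegral_prod _ hf.enorm.aemeasurable]
    simp [f, enorm_pow, ← enorm_eq_nnnorm]
  have hconst : ENNReal.ofReal (((2 * s + 1) * N) ^ 2) =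
      ((2 * s + 1) ^ 2 : ℝ≥0) * ENNReal.ofReal (N ^ 2) := by
    rw [mul_pow, ENNReal.ofReal_mul (by positivity)]
    norm_cast
  calc (‖SN N α ξ η‖₊ : ℝ≥0∞) ^ (2 * s) = ENNReal.ofReal (f (ξ, η)) := by
        simp [f, ENNReal.ofReal_pow, ofReal_norm, ← enorm_eq_nnnorm]
    _ ≤ ENNReal.ofReal (((2 * s + 1) * N) ^ 2 * ∫ p, f p ∂unitSquare) :=
        ENNReal.ofReal_le_ofReal (norm_SN_pow_le s hN α ξ η)
    _ = ENNReal.ofReal (((2 * s + 1) * N) ^ 2) * ‖∫ p, f p ∂unitSquare‖ₑ := by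
        rw [ENNReal.ofReal_mul (by positivity),
          Real.enorm_eq_ofReal (integral_nonneg fun _ => by positivity)]
    _ ≤ ENNReal.ofReal (((2 * s + 1) * N) ^ 2) * ∫⁻ p, ‖f p‖ₑ ∂unitSquare := by
        gcongr
        exact enorm_integral_le_lintegral_enorm _
    _ = _ := by rw [hlintegral, hconst]

theorem statement18_general (s : ℕ) :
    ∃ C : ℝ≥0, 0 < C ∧ ∀ (N : ℝ), 1 ≤ N → ∀ B : Set (Fin 3 → ℝ), MeasurableSet B →
      (∫⁻ α in B, ⨆ (ξ : ℝ) (η : ℝ), (‖SN N α ξ η‖₊ : ℝ≥0∞) ^ (2 * s)) ≤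
        C * ENNReal.ofReal (N ^ 2) *
          ∫⁻ α in B, ∫⁻ ξ in Set.Icc (0 : ℝ) 1, ∫⁻ η in Set.Icc (0 : ℝ) 1,
            (‖SN N α ξ η‖₊ : ℝ≥0∞) ^ (2 * s) := by
  refine ⟨(2 * s + 1) ^ 2, by positivity, fun N hN B _ => ?_⟩
  calc (∫⁻ α in B, ⨆ (ξ : ℝ) (η : ℝ), (‖SN N α ξ η‖₊ : ℝ≥0∞) ^ (2 * s))
      ≤ ∫⁻ α in B, ((2 * s + 1) ^ 2 : ℝ≥0) * ENNReal.ofReal (N ^ 2) *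
          ∫⁻ ξ in Set.Icc (0 : ℝ) 1, ∫⁻ η in Set.Icc (0 : ℝ) 1,
            (‖SN N α ξ η‖₊ : ℝ≥0∞) ^ (2 * s) :=
        lintegral_mono fun α => iSup₂_le fun ξ η => enorm_SN_pow_le s hN α ξ η
    _ = _ := lintegral_const_mul' _ _ (by finiteness)

/-- For every `s ∈ ℕ`, `s ≥ 1`, there is `C_s` such that for all `N ≥ 1`
and every measurable `𝔅 ⊆ 𝕋³` (the torus being modelled by `ℝ³`, phases being
`ℤ³`-periodic, with the sup over `ξ, η ∈ 𝕋` modelled as the sup over `ξ, η ∈ ℝ`):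
`∫_𝔅 sup_{ξ,η} |S_N(α;ξ,η)|^{2s} dα ≤ C_s N² ∫_𝔅 ∫_{𝕋²} |S_N(α;ξ,η)|^{2s} dξ dη dα`. -/
theorem statement18 (s : ℕ) (hs : 1 ≤ s) :
    ∃ C : ℝ≥0, 0 < C ∧ ∀ (N : ℝ), 1 ≤ N → ∀ B : Set (Fin 3 → ℝ), MeasurableSet B →
      (∫⁻ α in B, ⨆ (ξ : ℝ) (η : ℝ), (‖SN N α ξ η‖₊ : ℝ≥0∞) ^ (2 * s)) ≤
        C * ENNReal.ofReal (N ^ 2) *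
          ∫⁻ α in B, ∫⁻ ξ in Set.Icc (0 : ℝ) 1, ∫⁻ η in Set.Icc (0 : ℝ) 1,
            (‖SN N α ξ η‖₊ : ℝ≥0∞) ^ (2 * s) :=
  statement18_general s
end
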